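/- If σ ∈ L*_up(ψ, N) with ψ(x) = c·x^{−α}, 0 ≤ α < 1, and c ≥ 1/e, then E(H_{n,σ}) ≤ (ec/(1−α))·n^{1−α}·(1 + o(1)) as n → ∞. -/

import Mathlib

inductive BTree
  | leaf : BTree
  | node : BTree → BTree → BTree
deriving DecidableEq

def BTree.size : BTree → ℕ
  | .leaf => 1
  | .node l r => l.size + r.size

def BTree.height : BTree → ℕ
  | .leaf => 0
  | .node l r => 1 + max l.height r.height

noncomputable def Pσ (σ : ℕ → ℕ → ℝ) : BTree → ℝ
  | .leaf => 1
  | .node l r => σ l.size r.size * Pσ σ l * Pσ σ r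

def trees : ℕ → Finset BTree
  | 0 => ∅
  | 1 => {BTree.leaf}
  | (n+2) => (Finset.Ico 1 (n+2)).attach.biUnion
      (fun k => ((trees k.1) ×ˢ (trees (n+2-k.1))).image (fun p => BTree.node p.1 p.2))
  decreasing_by
  · exact (Finset.mem_Ico.mp k.2).2
  · have h := (Finset.mem_Ico.mp k.2).1; omega

noncomputable def expPow (σ : ℕ → ℕ → ℝ) (φ : ℝ) (n : ℕ) : ℝ :=
  ∑ t ∈ trees n, Pσ σ t * φ ^ t.height

noncomputable def expH (σ : ℕ → ℕ → ℝ) (n : ℕ) : ℝ :=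
  ∑ t ∈ trees n, Pσ σ t * (t.height : ℝ)

open Filter Asymptotics

lemma aux_size_mem : ∀ n, ∀ t ∈ trees n, t.size = n := by
  intro n
  induction n using Nat.strong_induction_on with
  | _ n ih =>
    match n with
    | 0 => simp [trees]
    | 1 => intro t ht; simp [trees] at ht; subst ht; rfl
    | (m+2) =>
      intro t ht
      rw [trees] at ht
      simp only [Finset.mem_biUnion, Finset.mem_image, Finset.mem_attach, true_and,
        Finset.mem_product, Subtype.exists] at ht
      obtain ⟨k, hk, p, ⟨hp1, hp2⟩, rfl⟩ := ht
      have hk' := Finset.mem_Ico.mp hk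
      have h1 := ih k (by omega) p.1 hp1
      have h2 := ih (m+2-k) (by omega) p.2 hp2
      simp [BTree.size, h1, h2]; omega

lemma aux_height_mem : ∀ n, ∀ t ∈ trees n, t.height ≤ n - 1 := by
  intro n
  induction n using Nat.strong_induction_on with
  | _ n ih =>
    match n with
    | 0 => simp [trees]
    | 1 => intro t ht; simp [trees] at ht; subst ht; simp [BTree.height]
    | (m+2) =>
      intro t ht
      rw [trees] at ht
      simp only [Finset.mem_biUnion, Finset.mem_image, Finset.mem_attach, true_and,
        Finset.mem_product, Subtype.exists] at ht
      obtain ⟨k, hk, p, ⟨hp1, hp2⟩, rfl⟩ := ht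
      have hk' := Finset.mem_Ico.mp hk
      have h1 := ih k (by omega) p.1 hp1
      have h2 := ih (m+2-k) (by omega) p.2 hp2
      simp only [BTree.height]
      omega

lemma aux_Pσ_nonneg (σ : ℕ → ℕ → ℝ) (hr : ∀ i j, 0 ≤ σ i j) : ∀ t, 0 ≤ Pσ σ t := by
  intro t
  induction t with
  | leaf => simp [Pσ]
  | node l r ihl ihr => exact mul_nonneg (mul_nonneg (hr _ _) ihl) ihr

lemma aux_sum_biUnion_le {ι β : Type*} [DecidableEq β] (s : Finset ι) (t : ι → Finset β)
    (f : β → ℝ) (hf : ∀ x, 0 ≤ f x) :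
    ∑ x ∈ s.biUnion t, f x ≤ ∑ i ∈ s, ∑ x ∈ t i, f x := by
  classical
  induction s using Finset.induction_on with
  | empty => simp
  | @insert a s' ha ih =>
    rw [Finset.biUnion_insert, Finset.sum_insert ha]
    have h2 : 0 ≤ ∑ x ∈ t a ∩ s'.biUnion t, f x := Finset.sum_nonneg fun x _ => hf x
    have h3 := Finset.sum_union_inter (s₁ := t a) (s₂ := s'.biUnion t) (f := f)
    linarith

lemma aux_image_sum (σ : ℕ → ℕ → ℝ) (k m : ℕ) :
    ∑ t ∈ ((trees k) ×ˢ (trees m)).image (fun p => BTree.node p.1 p.2), Pσ σ t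
      = σ k m * ((∑ l ∈ trees k, Pσ σ l) * (∑ r ∈ trees m, Pσ σ r)) := by
  rw [Finset.sum_image]
  · rw [Finset.sum_product]
    rw [Finset.sum_mul_sum]
    rw [Finset.mul_sum]
    apply Finset.sum_congr rfl; intro l hl
    rw [Finset.mul_sum]
    apply Finset.sum_congr rfl; intro r hrr
    show Pσ σ (BTree.node l r) = _
    rw [Pσ, aux_size_mem k l hl, aux_size_mem m r hrr]
    ring
  · intro p _ q _ h
    simp only [BTree.node.injEq] at h
    exact Prod.ext h.1 h.2

section
variable (σ : ℕ → ℕ → ℝ)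

noncomputable def uu (h n : ℕ) : ℝ := ∑ t ∈ trees n, if h ≤ t.height then Pσ σ t else 0

lemma aux_mass_le_one (hr : ∀ i j, 0 ≤ σ i j)
    (hsum : ∀ k, 2 ≤ k → ∑ i ∈ Finset.Ico 1 k, σ i (k - i) = 1) :
    ∀ n, ∑ t ∈ trees n, Pσ σ t ≤ 1 := by
  intro n
  induction n using Nat.strong_induction_on with
  | _ n ih =>
    match n with
    | 0 => simp [trees]
    | 1 => simp [trees, Pσ]
    | (m+2) =>
      rw [trees]
      calc ∑ t ∈ (Finset.Ico 1 (m+2)).attach.biUnion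
            (fun k => ((trees k.1) ×ˢ (trees (m+2-k.1))).image (fun p => BTree.node p.1 p.2)), Pσ σ t
          ≤ ∑ k ∈ (Finset.Ico 1 (m+2)).attach,
              ∑ t ∈ ((trees k.1) ×ˢ (trees (m+2-k.1))).image (fun p => BTree.node p.1 p.2), Pσ σ t :=
            aux_sum_biUnion_le _ _ _ (aux_Pσ_nonneg σ hr)
        _ = ∑ k ∈ Finset.Ico 1 (m+2),
              ∑ t ∈ ((trees k) ×ˢ (trees (m+2-k))).image (fun p => BTree.node p.1 p.2), Pσ σ t :=
            Finset.sum_attach _ (fun k => ∑ t ∈ ((trees k) ×ˢ (trees (m+2-k))).image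
              (fun p => BTree.node p.1 p.2), Pσ σ t)
        _ ≤ ∑ k ∈ Finset.Ico 1 (m+2), σ k (m+2-k) := by
            apply Finset.sum_le_sum
            intro k hk
            have hk' := Finset.mem_Ico.mp hk
            rw [aux_image_sum]
            have h1 := ih k (by omega)
            have h2 := ih (m+2-k) (by omega)
            have h1' : 0 ≤ ∑ l ∈ trees k, Pσ σ l := Finset.sum_nonneg fun x _ => aux_Pσ_nonneg σ hr x
            have h2' : 0 ≤ ∑ r ∈ trees (m+2-k), Pσ σ r := Finset.sum_nonneg fun x _ => aux_Pσ_nonneg σ hr x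
            have hσ := hr k (m+2-k)
            have hXY : (∑ l ∈ trees k, Pσ σ l) * (∑ r ∈ trees (m+2-k), Pσ σ r) ≤ 1 := by nlinarith
            nlinarith
        _ = 1 := hsum (m+2) (by omega)
lemma aux_uu_nonneg (hr : ∀ i j, 0 ≤ σ i j) (h n : ℕ) : 0 ≤ uu σ h n := by
  apply Finset.sum_nonneg
  intro t _
  split_ifs
  · exact aux_Pσ_nonneg σ hr t
  · exact le_rfl

lemma aux_uu_le_one (hr : ∀ i j, 0 ≤ σ i j)
    (hsum : ∀ k, 2 ≤ k → ∑ i ∈ Finset.Ico 1 k, σ i (k - i) = 1) (h n : ℕ) :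
    uu σ h n ≤ 1 := by
  refine le_trans ?_ (aux_mass_le_one σ hr hsum n)
  apply Finset.sum_le_sum
  intro t _
  split_ifs
  · exact le_rfl
  · exact aux_Pσ_nonneg σ hr t

lemma aux_uu_eq_zero (h n : ℕ) (hn : n ≤ h + 1) : uu σ (h+1) n = 0 := by
  apply Finset.sum_eq_zero
  intro t ht
  have := aux_height_mem n t ht
  rw [if_neg (by omega)]

lemma aux_uu_rec (hr : ∀ i j, 0 ≤ σ i j)
    (hsum : ∀ k, 2 ≤ k → ∑ i ∈ Finset.Ico 1 k, σ i (k - i) = 1) (h m : ℕ) :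
    uu σ (h+1) (m+2) ≤ ∑ k ∈ Finset.Ico 1 (m+2), σ k (m+2-k) * (uu σ h k + uu σ h (m+2-k)) := by
  have hf : ∀ t, 0 ≤ (if h+1 ≤ t.height then Pσ σ t else 0) := fun t => by
    split_ifs
    · exact aux_Pσ_nonneg σ hr t
    · exact le_rfl
  rw [uu, trees]
  calc ∑ t ∈ (Finset.Ico 1 (m+2)).attach.biUnion
        (fun k => ((trees k.1) ×ˢ (trees (m+2-k.1))).image (fun p => BTree.node p.1 p.2)),
          (if h+1 ≤ t.height then Pσ σ t else 0)
      ≤ ∑ k ∈ (Finset.Ico 1 (m+2)).attach,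
          ∑ t ∈ ((trees k.1) ×ˢ (trees (m+2-k.1))).image (fun p => BTree.node p.1 p.2),
            (if h+1 ≤ t.height then Pσ σ t else 0) :=
        aux_sum_biUnion_le _ _ _ hf
    _ = ∑ k ∈ Finset.Ico 1 (m+2),
          ∑ t ∈ ((trees k) ×ˢ (trees (m+2-k))).image (fun p => BTree.node p.1 p.2),
            (if h+1 ≤ t.height then Pσ σ t else 0) :=
        Finset.sum_attach _ (fun k => ∑ t ∈ ((trees k) ×ˢ (trees (m+2-k))).image
          (fun p => BTree.node p.1 p.2), (if h+1 ≤ t.height then Pσ σ t else 0))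
    _ ≤ ∑ k ∈ Finset.Ico 1 (m+2), σ k (m+2-k) * (uu σ h k + uu σ h (m+2-k)) := by
        apply Finset.sum_le_sum
        intro k hk
        have hk' := Finset.mem_Ico.mp hk
        have hinj : ∀ p ∈ (trees k) ×ˢ (trees (m+2-k)), ∀ q ∈ (trees k) ×ˢ (trees (m+2-k)),
            BTree.node p.1 p.2 = BTree.node q.1 q.2 → p = q := by
          intro p _ q _ hpq
          simp only [BTree.node.injEq] at hpq
          exact Prod.ext hpq.1 hpq.2
        rw [Finset.sum_image hinj]
        have key : ∀ l ∈ trees k, ∀ r ∈ trees (m+2-k),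
            (if h+1 ≤ (BTree.node l r).height then Pσ σ (BTree.node l r) else 0)
              ≤ σ k (m+2-k) * ((if h ≤ l.height then Pσ σ l else 0) * Pσ σ r
                  + Pσ σ l * (if h ≤ r.height then Pσ σ r else 0)) := by
          intro l hl r hrr
          have hPl := aux_Pσ_nonneg σ hr l
          have hPr := aux_Pσ_nonneg σ hr r
          have hσ := hr k (m+2-k)
          have hnode : Pσ σ (BTree.node l r) = σ k (m+2-k) * Pσ σ l * Pσ σ r := by
            rw [Pσ, aux_size_mem k l hl, aux_size_mem _ r hrr]
          have hht : (BTree.node l r).height = 1 + max l.height r.height := rfl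
          have hFl : 0 ≤ (if h ≤ l.height then Pσ σ l else 0) := by
            split_ifs
            exacts [hPl, le_rfl]
          have hFr : 0 ≤ (if h ≤ r.height then Pσ σ r else 0) := by
            split_ifs
            exacts [hPr, le_rfl]
          by_cases hC : h+1 ≤ (BTree.node l r).height
          · rw [if_pos hC, hnode]
            rw [hht] at hC
            have : h ≤ l.height ∨ h ≤ r.height := by omega
            rcases this with hL | hR
            · rw [if_pos hL]
              nlinarith [mul_nonneg hPl hFr, mul_nonneg hσ (mul_nonneg hPl hFr)]
            · rw [if_pos hR]
              nlinarith [mul_nonneg hFl hPr, mul_nonneg hσ (mul_nonneg hFl hPr)]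
          · rw [if_neg hC]
            have := mul_nonneg hFl hPr
            have := mul_nonneg hPl hFr
            nlinarith
        calc ∑ p ∈ (trees k) ×ˢ (trees (m+2-k)),
              (if h+1 ≤ (BTree.node p.1 p.2).height then Pσ σ (BTree.node p.1 p.2) else 0)
            ≤ ∑ p ∈ (trees k) ×ˢ (trees (m+2-k)),
                σ k (m+2-k) * ((if h ≤ p.1.height then Pσ σ p.1 else 0) * Pσ σ p.2
                  + Pσ σ p.1 * (if h ≤ p.2.height then Pσ σ p.2 else 0)) := by
              apply Finset.sum_le_sum
              intro p hp
              have hp' := Finset.mem_product.mp hp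
              exact key p.1 hp'.1 p.2 hp'.2
          _ = σ k (m+2-k) * (uu σ h k * (∑ r ∈ trees (m+2-k), Pσ σ r)
                + (∑ l ∈ trees k, Pσ σ l) * uu σ h (m+2-k)) := by
              rw [← Finset.mul_sum]
              congr 1
              rw [Finset.sum_add_distrib]
              congr 1
              · rw [uu, Finset.sum_mul_sum, Finset.sum_product]
              · rw [uu, Finset.sum_mul_sum, Finset.sum_product]
          _ ≤ σ k (m+2-k) * (uu σ h k + uu σ h (m+2-k)) := by
              have hσ := hr k (m+2-k)
              have h1 := aux_mass_le_one σ hr hsum k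
              have h2 := aux_mass_le_one σ hr hsum (m+2-k)
              have h1' : 0 ≤ ∑ l ∈ trees k, Pσ σ l :=
                Finset.sum_nonneg fun x _ => aux_Pσ_nonneg σ hr x
              have h2' : 0 ≤ ∑ r ∈ trees (m+2-k), Pσ σ r :=
                Finset.sum_nonneg fun x _ => aux_Pσ_nonneg σ hr x
              have hu1 := aux_uu_nonneg σ hr h k
              have hu2 := aux_uu_nonneg σ hr h (m+2-k)
              apply mul_le_mul_of_nonneg_left _ hσ
              nlinarith

lemma aux_uu_step (hr : ∀ i j, 0 ≤ σ i j)
    (hsum : ∀ k, 2 ≤ k → ∑ i ∈ Finset.Ico 1 k, σ i (k - i) = 1)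
    (α c : ℝ) (N : ℕ)
    (hub : ∀ n : ℕ, N ≤ n → ∀ i : ℕ, 1 ≤ i → i ≤ n - 1 →
      σ i (n - i) + σ (n - i) i ≤ c * (n : ℝ) ^ (-α))
    (h n : ℕ) (hN : N ≤ n) (hn2 : 2 ≤ n) :
    uu σ (h+1) n ≤ c * (n : ℝ) ^ (-α) * ∑ k ∈ Finset.Ico 1 n, uu σ h k := by
  obtain ⟨m, rfl⟩ : ∃ m, n = m + 2 := ⟨n - 2, by omega⟩
  refine le_trans (aux_uu_rec σ hr hsum h m) ?_
  have hswap : ∑ k ∈ Finset.Ico 1 (m+2), σ k (m+2-k) * uu σ h (m+2-k)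
      = ∑ k ∈ Finset.Ico 1 (m+2), σ (m+2-k) k * uu σ h k := by
    apply Finset.sum_nbij' (fun k => m+2-k) (fun k => m+2-k)
    · intro a ha
      have := Finset.mem_Ico.mp ha
      exact Finset.mem_Ico.mpr (by omega)
    · intro a ha
      have := Finset.mem_Ico.mp ha
      exact Finset.mem_Ico.mpr (by omega)
    · intro a ha
      have := Finset.mem_Ico.mp ha
      omega
    · intro a ha
      have := Finset.mem_Ico.mp ha
      omega
    · intro a ha
      have := Finset.mem_Ico.mp ha
      have : m+2-(m+2-a) = a := by omega
      rw [this]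
  calc ∑ k ∈ Finset.Ico 1 (m+2), σ k (m+2-k) * (uu σ h k + uu σ h (m+2-k))
      = ∑ k ∈ Finset.Ico 1 (m+2), (σ k (m+2-k) + σ (m+2-k) k) * uu σ h k := by
        rw [Finset.sum_congr rfl (fun k _ => mul_add (σ k (m+2-k)) _ _), Finset.sum_add_distrib,
          hswap, ← Finset.sum_add_distrib]
        exact Finset.sum_congr rfl (fun k _ => by ring)
    _ ≤ ∑ k ∈ Finset.Ico 1 (m+2), c * ((m+2 : ℕ) : ℝ) ^ (-α) * uu σ h k := by
        apply Finset.sum_le_sum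
        intro k hk
        have hk' := Finset.mem_Ico.mp hk
        have hb := hub (m+2) hN k (by omega) (by omega)
        exact mul_le_mul_of_nonneg_right hb (aux_uu_nonneg σ hr h k)
    _ = c * ((m+2 : ℕ) : ℝ) ^ (-α) * ∑ k ∈ Finset.Ico 1 (m+2), uu σ h k := by
        rw [Finset.mul_sum]
noncomputable def Sig (α : ℝ) (n : ℕ) : ℝ := ∑ m ∈ Finset.Icc 1 n, (m:ℝ) ^ (-α)

lemma Sig_nonneg (α : ℝ) (n : ℕ) : 0 ≤ Sig α n :=
  Finset.sum_nonneg fun m _ => Real.rpow_nonneg (Nat.cast_nonneg m) _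

lemma Sig_succ (α : ℝ) (j : ℕ) : Sig α (j+1) = Sig α j + ((j+1 : ℕ):ℝ) ^ (-α) := by
  rw [Sig, Sig, Finset.sum_Icc_succ_top (by omega)]

lemma Sig_mono (α : ℝ) {a b : ℕ} (h : a ≤ b) : Sig α a ≤ Sig α b :=
  Finset.sum_le_sum_of_subset_of_nonneg (Finset.Icc_subset_Icc_right h)
    (fun m _ _ => Real.rpow_nonneg (Nat.cast_nonneg m) _)

lemma pow_diff_le {a b : ℝ} (h0 : 0 ≤ a) (hab : a ≤ b) (h : ℕ) :
    (b - a) * a ^ h * (h+1 : ℝ) ≤ b ^ (h+1) - a ^ (h+1) := by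
  have hg := geom_sum₂_mul b a (h+1)
  have hterm : ∀ i ∈ Finset.range (h+1), a ^ h ≤ b ^ i * a ^ (h - i) := by
    intro i hi
    have hi' := Finset.mem_range.mp hi
    calc a ^ h = a ^ i * a ^ (h - i) := by rw [← pow_add]; congr 1; omega
      _ ≤ b ^ i * a ^ (h - i) :=
        mul_le_mul_of_nonneg_right (pow_le_pow_left₀ h0 hab i) (pow_nonneg h0 _)
  have hsum : (h+1 : ℝ) * a ^ h ≤ ∑ i ∈ Finset.range (h+1), b ^ i * a ^ (h+1-1-i) := by
    simp only [Nat.add_sub_cancel]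
    calc (h+1 : ℝ) * a ^ h = ∑ _i ∈ Finset.range (h+1), a ^ h := by
          rw [Finset.sum_const, Finset.card_range]; ring
      _ ≤ _ := Finset.sum_le_sum hterm
  calc (b - a) * a ^ h * (h+1 : ℝ) = ((h+1:ℝ) * a ^ h) * (b - a) := by ring
    _ ≤ (∑ i ∈ Finset.range (h+1), b ^ i * a ^ (h+1-1-i)) * (b - a) := by
        apply mul_le_mul_of_nonneg_right hsum
        linarith
    _ = b ^ (h+1) - a ^ (h+1) := hg

noncomputable def BB (α c : ℝ) (N : ℕ) (j : ℕ) : ℝ := c * Sig α j + max (N:ℝ) 1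

lemma BB_pos (α c : ℝ) (hc0 : 0 < c) (N j : ℕ) : 0 < BB α c N j := by
  have h1 := Sig_nonneg α j
  have h2 : (1:ℝ) ≤ max (N:ℝ) 1 := le_max_right _ _
  have : 0 ≤ c * Sig α j := mul_nonneg hc0.le h1
  unfold BB
  linarith

lemma BB_mono (α c : ℝ) (hc0 : 0 < c) (N : ℕ) {a b : ℕ} (h : a ≤ b) :
    BB α c N a ≤ BB α c N b := by
  have hs := Sig_mono α h
  unfold BB
  nlinarith

lemma BB_succ (α c : ℝ) (N j : ℕ) :
    BB α c N (j+1) = BB α c N j + c * ((j+1:ℕ):ℝ) ^ (-α) := by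
  unfold BB
  rw [Sig_succ]
  ring

lemma aux_main_bound (σ : ℕ → ℕ → ℝ) (α c : ℝ) (N : ℕ)
    (hr : ∀ i j, 0 ≤ σ i j)
    (hsum : ∀ k, 2 ≤ k → ∑ i ∈ Finset.Ico 1 k, σ i (k - i) = 1)
    (hub : ∀ n : ℕ, N ≤ n → ∀ i : ℕ, 1 ≤ i → i ≤ n - 1 →
      σ i (n - i) + σ (n - i) i ≤ c * (n : ℝ) ^ (-α))
    (hα0 : 0 ≤ α) (hc0 : 0 < c) :
    ∀ h n, uu σ h n ≤ (BB α c N (n-1)) ^ h / (Nat.factorial h) := by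
  intro h
  induction h with
  | zero => intro n; simpa using aux_uu_le_one σ hr hsum 0 n
  | succ h ih =>
    intro n
    have hBBpos := BB_pos α c hc0 N (n-1)
    have hfacpos : (0:ℝ) < (Nat.factorial (h+1) : ℝ) := by
      exact_mod_cast Nat.factorial_pos (h+1)
    by_cases hcase : n ≤ h + 1
    · rw [aux_uu_eq_zero σ h n hcase]
      positivity
    push_neg at hcase
    by_cases hN : n < N
    · refine le_trans (aux_uu_le_one σ hr hsum _ n) ?_
      rw [le_div_iff₀ hfacpos, one_mul]
      have h1 : ((Nat.factorial (h+1)) : ℝ) ≤ ((h+1:ℕ):ℝ) ^ (h+1) := by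
        exact_mod_cast Nat.factorial_le_pow (h+1)
      have h2 : ((h+1:ℕ):ℝ) ≤ BB α c N (n-1) := by
        have hle : (h+1:ℕ) ≤ N := by omega
        have : ((h+1:ℕ):ℝ) ≤ (N:ℝ) := by exact_mod_cast hle
        have h3 : (N:ℝ) ≤ max (N:ℝ) 1 := le_max_left _ _
        have h4 : 0 ≤ c * Sig α (n-1) := mul_nonneg hc0.le (Sig_nonneg α _)
        unfold BB
        linarith
      calc ((Nat.factorial (h+1)) : ℝ) ≤ ((h+1:ℕ):ℝ) ^ (h+1) := h1
        _ ≤ BB α c N (n-1) ^ (h+1) := pow_le_pow_left₀ (by positivity) h2 _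
    · push_neg at hN
      have step := aux_uu_step σ hr hsum α c N hub h n hN (by omega)
      have hrpow : (0:ℝ) ≤ c * (n:ℝ) ^ (-α) :=
        mul_nonneg hc0.le (Real.rpow_nonneg (Nat.cast_nonneg n) _)
      have hrec : ∑ k ∈ Finset.Ico 1 n, uu σ h k
          ≤ ∑ k ∈ Finset.Ico 1 n, (BB α c N (k-1)) ^ h / (Nat.factorial h) :=
        Finset.sum_le_sum (fun k _ => ih k)
      have hterm : ∀ k ∈ Finset.Ico 1 n, c * (n:ℝ)^(-α) * (BB α c N (k-1))^h
          ≤ ((BB α c N k)^(h+1) - (BB α c N (k-1))^(h+1)) / ((h:ℝ)+1) := by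
        intro k hk
        have hk' := Finset.mem_Ico.mp hk
        obtain ⟨j, rfl⟩ : ∃ j, k = j + 1 := ⟨k - 1, by omega⟩
        have hmono : BB α c N j ≤ BB α c N (j+1) := BB_mono α c hc0 N (by omega)
        have hdiff := BB_succ α c N j
        have hkpos : (0:ℝ) < ((j+1:ℕ):ℝ) := by positivity
        have hkn : ((j+1:ℕ):ℝ) ≤ (n:ℝ) := by exact_mod_cast (by omega : (j+1:ℕ) ≤ n)
        have hle : (n:ℝ)^(-α) ≤ ((j+1:ℕ):ℝ)^(-α) :=
          Real.rpow_le_rpow_of_nonpos hkpos hkn (neg_nonpos.mpr hα0)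
        have hBBj := BB_pos α c hc0 N j
        have hpd := pow_diff_le hBBj.le hmono h
        simp only [Nat.add_sub_cancel]
        calc c * (n:ℝ)^(-α) * (BB α c N j)^h
            ≤ c * ((j+1:ℕ):ℝ)^(-α) * (BB α c N j)^h := by
              apply mul_le_mul_of_nonneg_right _ (pow_nonneg hBBj.le _)
              exact mul_le_mul_of_nonneg_left hle hc0.le
          _ = (BB α c N (j+1) - BB α c N j) * (BB α c N j)^h := by
              rw [hdiff]; ring
          _ ≤ ((BB α c N (j+1))^(h+1) - (BB α c N j)^(h+1)) / ((h:ℝ)+1) := by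
              rw [le_div_iff₀ (by positivity)]
              linarith
      have tele : ∑ k ∈ Finset.Ico 1 n, ((BB α c N k)^(h+1) - (BB α c N (k-1))^(h+1))
          = (BB α c N (n-1))^(h+1) - (BB α c N 0)^(h+1) := by
        rw [Finset.sum_Ico_eq_sum_range]
        have : ∀ i, (BB α c N (1+i))^(h+1) - (BB α c N (1+i-1))^(h+1)
            = (fun i => (BB α c N i)^(h+1)) (i+1) - (fun i => (BB α c N i)^(h+1)) i := by
          intro i
          have e1 : 1+i = i+1 := Nat.add_comm 1 i
          have e2 : 1+i-1 = i := by omega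
          rw [e2, e1]
        rw [Finset.sum_congr rfl (fun i _ => this i), Finset.sum_range_sub
          (fun i => (BB α c N i)^(h+1)) (n-1)]
      have hkey : c * (n:ℝ)^(-α) * ∑ k ∈ Finset.Ico 1 n, (BB α c N (k-1))^h
          ≤ (BB α c N (n-1))^(h+1) / ((h:ℝ)+1) := by
        rw [Finset.mul_sum]
        calc ∑ k ∈ Finset.Ico 1 n, c * (n:ℝ)^(-α) * (BB α c N (k-1))^h
            ≤ ∑ k ∈ Finset.Ico 1 n, ((BB α c N k)^(h+1) - (BB α c N (k-1))^(h+1)) / ((h:ℝ)+1) :=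
              Finset.sum_le_sum hterm
          _ = ((BB α c N (n-1))^(h+1) - (BB α c N 0)^(h+1)) / ((h:ℝ)+1) := by
              rw [← Finset.sum_div, tele]
          _ ≤ (BB α c N (n-1))^(h+1) / ((h:ℝ)+1) := by
              apply div_le_div_of_nonneg_right _ (by positivity)
              nlinarith [pow_nonneg (BB_pos α c hc0 N 0).le (h+1)]
      have hfach : (0:ℝ) < (Nat.factorial h : ℝ) := by exact_mod_cast Nat.factorial_pos h
      calc uu σ (h+1) n ≤ c * (n:ℝ)^(-α) * ∑ k ∈ Finset.Ico 1 n, uu σ h k := step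
        _ ≤ c * (n:ℝ)^(-α) * ∑ k ∈ Finset.Ico 1 n, (BB α c N (k-1))^h / (Nat.factorial h) :=
            mul_le_mul_of_nonneg_left hrec hrpow
        _ = (c * (n:ℝ)^(-α) * ∑ k ∈ Finset.Ico 1 n, (BB α c N (k-1))^h) / (Nat.factorial h) := by
            rw [← Finset.sum_div]; ring
        _ ≤ ((BB α c N (n-1))^(h+1) / ((h:ℝ)+1)) / (Nat.factorial h) := by
            apply div_le_div_of_nonneg_right hkey hfach.le
        _ = (BB α c N (n-1))^(h+1) / (Nat.factorial (h+1)) := by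
            rw [div_div, Nat.factorial_succ]
            push_cast
            ring_nf

lemma aux_bern {a p : ℝ} (ha : 1 ≤ a) (hp0 : 0 ≤ p) (hp1 : p ≤ 1) :
    (a-1)^p ≤ a^p - p * a^(p-1) := by
  have ha0 : (0:ℝ) < a := by linarith
  have hs : (-1:ℝ) ≤ -(1/a) := by
    have h1 : 1/a ≤ 1 := by rw [div_le_one ha0]; exact ha
    linarith
  have h := rpow_one_add_le_one_add_mul_self hs hp0 hp1
  have h1 : (1 + -(1/a)) = (a-1)/a := by
    field_simp
    ring
  rw [h1] at h
  have h2 : ((a-1)/a)^p = (a-1)^p / a^p := Real.div_rpow (sub_nonneg.mpr ha) ha0.le p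
  rw [h2] at h
  have hap : (0:ℝ) < a^p := Real.rpow_pos_of_pos ha0 p
  rw [div_le_iff₀ hap] at h
  have h3 : a^(p-1) = a^p / a := by
    rw [Real.rpow_sub ha0, Real.rpow_one]
  calc (a-1)^p ≤ (1 + p * -(1/a)) * a^p := h
    _ = a^p - p * (a^p / a) := by ring
    _ = a^p - p * a^(p-1) := by rw [h3]

lemma Sig_le (α : ℝ) (hα0 : 0 ≤ α) (hα1 : α < 1) (n : ℕ) :
    Sig α n ≤ (n:ℝ)^(1-α) / (1-α) := by
  induction n with
  | zero =>
    have : Sig α 0 = 0 := by simp [Sig]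
    rw [this, Nat.cast_zero, Real.zero_rpow (by linarith)]
    simp
  | succ j ihj =>
    rw [Sig_succ]
    have h1α : (0:ℝ) < 1 - α := by linarith
    have hb := aux_bern (a := ((j+1:ℕ):ℝ)) (p := 1-α)
      (by push_cast; linarith [Nat.cast_nonneg (α := ℝ) j]) (by linarith) (by linarith)
    have e1 : ((j+1:ℕ):ℝ) - 1 = (j:ℝ) := by push_cast; ring
    have e2 : (1-α) - 1 = -α := by ring
    rw [e1, e2] at hb
    have key : ((j+1:ℕ):ℝ)^(-α) ≤ (((j+1:ℕ):ℝ)^(1-α) - ((j:ℕ):ℝ)^(1-α))/(1-α) := by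
      rw [le_div_iff₀ h1α]
      push_cast at hb ⊢
      nlinarith
    have hid : ((j:ℕ):ℝ)^(1-α)/(1-α) + (((j+1:ℕ):ℝ)^(1-α) - ((j:ℕ):ℝ)^(1-α))/(1-α)
        = ((j+1:ℕ):ℝ)^(1-α)/(1-α) := by ring
    push_cast at ihj key hid ⊢
    linarith

lemma aux_tail {B : ℝ} (hB : 0 < B) {h : ℕ} (hh : 0 < h) :
    B^h / (Nat.factorial h) ≤ (Real.exp 1 * B / h)^h := by
  have hhpos : (0:ℝ) < (h:ℝ) := by exact_mod_cast hh
  have hfac : (0:ℝ) < (Nat.factorial h : ℝ) := by exact_mod_cast Nat.factorial_pos h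
  have h1 : (h:ℝ)^h / (Nat.factorial h) ≤ Real.exp h := by
    have hsum := Real.sum_le_exp_of_nonneg (x := (h:ℝ)) (Nat.cast_nonneg h) (h+1)
    have hterm : (h:ℝ)^h / (Nat.factorial h) ≤ ∑ i ∈ Finset.range (h+1), (h:ℝ)^i / (Nat.factorial i) := by
      apply Finset.single_le_sum (f := fun i => (h:ℝ)^i / (Nat.factorial i))
      · intro i _
        positivity
      · exact Finset.self_mem_range_succ h
    exact hterm.trans hsum
  have hexp : Real.exp (h:ℝ) = (Real.exp 1)^h := by
    rw [← Real.exp_nat_mul]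
    norm_num
  calc B^h / (Nat.factorial h) = (B/h)^h * ((h:ℝ)^h / (Nat.factorial h)) := by
        rw [div_pow]
        field_simp
    _ ≤ (B/h)^h * Real.exp h := by
        apply mul_le_mul_of_nonneg_left h1 (by positivity)
    _ = (Real.exp 1 * B / h)^h := by
        rw [hexp, ← mul_pow]
        congr 1
        ring

lemma aux_expH_eq (n : ℕ) : expH σ n = ∑ h ∈ Finset.range (n-1), uu σ (h+1) n := by
  rw [expH]
  have hswap : ∀ t ∈ trees n, Pσ σ t * (t.height:ℝ)
      = ∑ h ∈ Finset.range (n-1), (if h+1 ≤ t.height then Pσ σ t else 0) := by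
    intro t ht
    have hht := aux_height_mem n t ht
    have hcong : ∀ h ∈ Finset.range (n-1), (if h+1 ≤ t.height then Pσ σ t else 0)
        = (if h ∈ Finset.range t.height then Pσ σ t else 0) := by
      intro h _
      apply if_congr _ rfl rfl
      rw [Finset.mem_range]
      omega
    rw [Finset.sum_congr rfl hcong, Finset.sum_ite_mem]
    have hint : Finset.range (n-1) ∩ Finset.range t.height = Finset.range t.height := by
      ext x
      simp only [Finset.mem_inter, Finset.mem_range]
      omega
    rw [hint, Finset.sum_const, Finset.card_range, nsmul_eq_mul]
    ring
  rw [Finset.sum_congr rfl hswap, Finset.sum_comm]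
  exact Finset.sum_congr rfl fun h _ => by rw [uu]

set_option maxHeartbeats 2000000 in
lemma aux_final (α c : ℝ) (N : ℕ)
    (hα0 : 0 ≤ α) (hα1 : α < 1) (hc0 : 0 < c)
    (hr : ∀ i j, 0 ≤ σ i j)
    (hsum : ∀ k, 2 ≤ k → ∑ i ∈ Finset.Ico 1 k, σ i (k - i) = 1)
    (hub : ∀ n : ℕ, N ≤ n → ∀ i : ℕ, 1 ≤ i → i ≤ n - 1 →
      σ i (n - i) + σ (n - i) i ≤ c * (n : ℝ) ^ (-α)) :
    ∀ ε : ℝ, 0 < ε → ∀ᶠ n : ℕ in Filter.atTop,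
      expH σ n ≤ (1+ε) * (Real.exp 1 * c/(1-α)) * (n:ℝ)^(1-α) := by
  intro ε hε
  set δ := ε/2 with hδdef
  have hδ : 0 < δ := by positivity
  have hexp1 := Real.exp_pos 1
  set K : ℝ := (1+δ) * Real.exp 1 * (max (N:ℝ) 1) + 1 + 1/δ with hK
  have h1α : (0:ℝ) < 1-α := by linarith
  have hM : 0 < Real.exp 1 * c / (1-α) := by positivity
  have htend : Filter.Tendsto (fun n : ℕ => (n:ℝ)^(1-α)) Filter.atTop Filter.atTop :=
    (tendsto_rpow_atTop h1α).comp tendsto_natCast_atTop_atTop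
  filter_upwards [htend.eventually_ge_atTop (K / (δ * (Real.exp 1 * c/(1-α)))),
    Filter.eventually_ge_atTop 1] with n hn hn1
  set B := BB α c N (n-1) with hBdef
  have hBpos : 0 < B := BB_pos α c hc0 N (n-1)
  set h₀ := ⌈(1+δ) * Real.exp 1 * B⌉₊ with hh₀
  have hh₀pos : 0 < (1+δ) * Real.exp 1 * B := by positivity
  set r : ℝ := 1/(1+δ) with hrdef
  have hr0 : 0 < r := by positivity
  have hrlt : r < 1 := by
    rw [hrdef, div_lt_one (by linarith)]
    linarith
  have hterm : ∀ h ∈ Finset.range (n-1),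
      uu σ (h+1) n ≤ (if h+1 < h₀ then (1:ℝ) else 0) + r^(h+1) := by
    intro h _
    by_cases hcase : h+1 < h₀
    · rw [if_pos hcase]
      have h1 := aux_uu_le_one σ hr hsum (h+1) n
      have h2 : (0:ℝ) ≤ r^(h+1) := by positivity
      linarith
    · push_neg at hcase
      have hb := aux_main_bound σ α c N hr hsum hub hα0 hc0 (h+1) n
      have ht := aux_tail hBpos (h := h+1) (by omega)
      have hh1pos : (0:ℝ) < ((h+1:ℕ):ℝ) := by positivity
      have hle : Real.exp 1 * B / ((h+1:ℕ):ℝ) ≤ r := by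
        rw [div_le_iff₀ hh1pos]
        have hceil : (1+δ)*Real.exp 1*B ≤ (h₀:ℝ) := Nat.le_ceil _
        have hcast : (h₀:ℝ) ≤ ((h+1:ℕ):ℝ) := by exact_mod_cast hcase
        have hr' : r * (1+δ) = 1 := by
          rw [hrdef]
          field_simp
        nlinarith
      have hpow : (Real.exp 1 * B / ((h+1:ℕ):ℝ))^(h+1) ≤ r^(h+1) :=
        pow_le_pow_left₀ (by positivity) hle _
      have h2 : (0:ℝ) ≤ (if h+1 < h₀ then (1:ℝ) else 0) := by positivity
      calc uu σ (h+1) n ≤ B^(h+1)/(Nat.factorial (h+1)) := hb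
        _ ≤ (Real.exp 1 * B / ((h+1:ℕ):ℝ))^(h+1) := ht
        _ ≤ r^(h+1) := hpow
        _ ≤ (if h+1 < h₀ then (1:ℝ) else 0) + r^(h+1) := by linarith
  have hS1 : ∑ h ∈ Finset.range (n-1), (if h+1 < h₀ then (1:ℝ) else 0) ≤ (h₀:ℝ) := by
    calc ∑ h ∈ Finset.range (n-1), (if h+1 < h₀ then (1:ℝ) else 0)
        ≤ ∑ h ∈ Finset.range (n-1), (if h ∈ Finset.range h₀ then (1:ℝ) else 0) := by
          apply Finset.sum_le_sum
          intro h _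
          by_cases p : h+1 < h₀
          · rw [if_pos p, if_pos (Finset.mem_range.mpr (by omega))]
          · rw [if_neg p]
            split_ifs
            · norm_num
            · exact le_refl 0
      _ = ((Finset.range (n-1) ∩ Finset.range h₀).card : ℝ) := by
          rw [Finset.sum_ite_mem, Finset.sum_const, nsmul_eq_mul, mul_one]
      _ ≤ (h₀:ℝ) := by
          have h1 : (Finset.range (n-1) ∩ Finset.range h₀).card ≤ h₀ :=
            le_trans (Finset.card_le_card Finset.inter_subset_right) (by simp)
          exact_mod_cast h1
  have hS2 : ∑ h ∈ Finset.range (n-1), r^(h+1) ≤ 1/δ := by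
    have hgeo : (∑ h ∈ Finset.range (n-1), r^h) * (1-r) ≤ 1 := by
      have hgm := geom_sum_mul r (n-1)
      have h1 : (∑ h ∈ Finset.range (n-1), r^h) * (1-r) = 1 - r^(n-1) := by
        have : (∑ i ∈ Finset.range (n-1), r ^ i) * (r - 1) = r ^ (n-1) - 1 := hgm
        nlinarith [this]
      rw [h1]
      have : (0:ℝ) ≤ r^(n-1) := by positivity
      linarith
    have hgeo2 : ∑ h ∈ Finset.range (n-1), r^h ≤ 1/(1-r) := by
      rw [le_div_iff₀ (by linarith)]
      exact hgeo
    calc ∑ h ∈ Finset.range (n-1), r^(h+1) = r * ∑ h ∈ Finset.range (n-1), r^h := by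
          rw [Finset.mul_sum]
          exact Finset.sum_congr rfl fun h _ => by ring
      _ ≤ r * (1/(1-r)) := mul_le_mul_of_nonneg_left hgeo2 hr0.le
      _ = 1/δ := by
          rw [hrdef]
          have h1 : (1:ℝ)+δ ≠ 0 := by linarith
          have h2 : δ ≠ 0 := ne_of_gt hδ
          have h3 : 1 - 1/(1+δ) = δ/(1+δ) := by field_simp; ring
          rw [h3]
          field_simp
  have hmain : expH σ n ≤ (h₀:ℝ) + 1/δ := by
    rw [aux_expH_eq σ n]
    calc ∑ h ∈ Finset.range (n-1), uu σ (h+1) n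
        ≤ ∑ h ∈ Finset.range (n-1), ((if h+1 < h₀ then (1:ℝ) else 0) + r^(h+1)) :=
          Finset.sum_le_sum hterm
      _ = (∑ h ∈ Finset.range (n-1), (if h+1 < h₀ then (1:ℝ) else 0))
          + ∑ h ∈ Finset.range (n-1), r^(h+1) := Finset.sum_add_distrib
      _ ≤ (h₀:ℝ) + 1/δ := add_le_add hS1 hS2
  have hceil2 : (h₀:ℝ) < (1+δ)*Real.exp 1*B + 1 := Nat.ceil_lt_add_one hh₀pos.le
  have hBle : B ≤ c * ((n:ℝ)^(1-α)/(1-α)) + max (N:ℝ) 1 := by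
    have hs1 : Sig α (n-1) ≤ ((n-1:ℕ):ℝ)^(1-α)/(1-α) := Sig_le α hα0 hα1 (n-1)
    have hs2 : ((n-1:ℕ):ℝ)^(1-α) ≤ (n:ℝ)^(1-α) :=
      Real.rpow_le_rpow (by positivity) (by exact_mod_cast Nat.sub_le n 1) h1α.le
    have hs3 : Sig α (n-1) ≤ (n:ℝ)^(1-α)/(1-α) :=
      hs1.trans (div_le_div_of_nonneg_right hs2 h1α.le)
    rw [hBdef]
    unfold BB
    nlinarith [hs3]
  have hfin1 : expH σ n ≤ (1+δ) * (Real.exp 1 * c/(1-α)) * (n:ℝ)^(1-α) + K := by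
    have e1 : (1+δ)*Real.exp 1*(c * ((n:ℝ)^(1-α)/(1-α)) + max (N:ℝ) 1)
        = (1+δ)*(Real.exp 1*c/(1-α))*(n:ℝ)^(1-α) + (1+δ)*Real.exp 1*(max (N:ℝ) 1) := by
      field_simp
    have h2 : (1+δ)*Real.exp 1*B ≤ (1+δ)*Real.exp 1*(c * ((n:ℝ)^(1-α)/(1-α)) + max (N:ℝ) 1) :=
      mul_le_mul_of_nonneg_left hBle (by positivity)
    rw [e1] at h2
    rw [hK]
    linarith
  have hK' : K ≤ δ * (Real.exp 1*c/(1-α)) * (n:ℝ)^(1-α) := by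
    have hn' : K ≤ (n:ℝ)^(1-α) * (δ * (Real.exp 1 * c/(1-α))) := by
      rw [← div_le_iff₀ (by positivity)]
      exact hn
    calc K ≤ (n:ℝ)^(1-α) * (δ * (Real.exp 1 * c/(1-α))) := hn'
      _ = δ * (Real.exp 1*c/(1-α)) * (n:ℝ)^(1-α) := by ring
  calc expH σ n ≤ (1+δ) * (Real.exp 1 * c/(1-α)) * (n:ℝ)^(1-α) + K := hfin1
    _ ≤ (1+δ) * (Real.exp 1 * c/(1-α)) * (n:ℝ)^(1-α)
        + δ * (Real.exp 1*c/(1-α)) * (n:ℝ)^(1-α) := by linarith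
    _ = (1+ε) * (Real.exp 1 * c/(1-α)) * (n:ℝ)^(1-α) := by
        rw [hδdef]
        ring

end

theorem expected_height_upper_bounded_poly (σ : ℕ → ℕ → ℝ) (α c : ℝ)
    (hα0 : 0 ≤ α) (hα1 : α < 1) (hc : (Real.exp 1)⁻¹ ≤ c) (N : ℕ)
    (hrange : ∀ i j, 0 ≤ σ i j ∧ σ i j ≤ 1)
    (hsum : ∀ k, 2 ≤ k → ∑ i ∈ Finset.Ico 1 k, σ i (k - i) = 1)
    (hub : ∀ n : ℕ, N ≤ n → ∀ i : ℕ, 1 ≤ i → i ≤ n - 1 →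
      σ i (n - i) + σ (n - i) i ≤ c * (n : ℝ) ^ (-α)) :
    ∃ g : ℕ → ℝ, g =o[atTop] (fun _ => (1 : ℝ)) ∧
      ∀ᶠ n : ℕ in atTop,
        expH σ n ≤ (Real.exp 1 * c / (1 - α)) * (n : ℝ) ^ (1 - α) * (1 + g n) := by
  have hexp1 := Real.exp_pos 1
  have hc0 : 0 < c := lt_of_lt_of_le (inv_pos.mpr hexp1) hc
  have hr : ∀ i j, 0 ≤ σ i j := fun i j => (hrange i j).1
  have h1α : (0:ℝ) < 1 - α := by linarith
  set M : ℕ → ℝ := fun n => (Real.exp 1 * c / (1-α)) * (n:ℝ)^(1-α) with hM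
  have hMpos : ∀ n : ℕ, 1 ≤ n → 0 < M n := by
    intro n hn1
    have h2 : (0:ℝ) < (n:ℝ)^(1-α) :=
      Real.rpow_pos_of_pos (by exact_mod_cast hn1) _
    have h3 : (0:ℝ) < Real.exp 1 * c / (1-α) := by positivity
    exact mul_pos h3 h2
  refine ⟨fun n => max 0 (expH σ n / M n - 1), ?_, ?_⟩
  · rw [isLittleO_one_iff]
    rw [tendsto_order]
    constructor
    · intro a ha
      filter_upwards with n
      have : (0:ℝ) ≤ max 0 (expH σ n / M n - 1) := le_max_left _ _
      linarith
    · intro a ha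
      have hev := aux_final σ α c N hα0 hα1 hc0 hr hsum hub (a/2) (by linarith)
      filter_upwards [hev, Filter.eventually_ge_atTop 1] with n hn hn1
      have hMp := hMpos n hn1
      have heq : (1+a/2) * (Real.exp 1 * c/(1-α)) * (n:ℝ)^(1-α) = (1+a/2) * M n := by
        rw [hM]
        ring
      rw [heq] at hn
      have hdiv : expH σ n / M n ≤ 1 + a/2 := by
        rw [div_le_iff₀ hMp]
        linarith
      have : max 0 (expH σ n / M n - 1) ≤ a/2 := by
        apply max_le (by linarith) (by linarith)
      linarith
  · filter_upwards [Filter.eventually_ge_atTop 1] with n hn1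
    have hMp := hMpos n hn1
    have hg : expH σ n / M n - 1 ≤ max 0 (expH σ n / M n - 1) := le_max_right _ _
    show expH σ n ≤ (Real.exp 1 * c / (1 - α)) * (n : ℝ) ^ (1 - α)
      * (1 + max 0 (expH σ n / M n - 1))
    calc expH σ n = M n * (expH σ n / M n) := by
          field_simp
      _ ≤ M n * (1 + max 0 (expH σ n / M n - 1)) :=
          mul_le_mul_of_nonneg_left (by linarith) hMp.le
      _ = (Real.exp 1 * c / (1 - α)) * (n : ℝ) ^ (1 - α)
          * (1 + max 0 (expH σ n / M n - 1)) := by rw [hM]
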